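/- arXiv:2307.06780 — 3 statements merged into one kernel-verified Lean document; each statement's English description precedes it below -/
import Mathlib

section
/- Let G be a finite group acting linearly on a finite-dimensional F_q-vector space V. The map sending a G-orbit O* in V* to the function χ_{O*} = FT(q^{N/2}·1_{-O*}) is a bijection from the set of G-orbits on V* to the set of irreducible G-invariant characters of the additive group (V,+), where a G-invariant character is called irreducible if it cannot be written as a sum of two nonzero G-invariant characters. -/
open Finset
open scoped Classical
set_option linter.unusedSectionVars false
set_option maxHeartbeats 1000000

/-- `q^{N/2}` realised as `(√q)^N`. -/
noncomputable def ftNorm (Fq : Type*) [Fintype Fq] (N : ℕ) : ℝ :=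
  Real.sqrt (Fintype.card Fq) ^ N

/-- Normalized Fourier transform of a function on `V`, valued on the dual `V*`. -/
noncomputable def FT {Fq V : Type*} [Field Fq] [Fintype Fq] [AddCommGroup V] [Module Fq V]
    [Fintype V] (χ : AddChar Fq ℂ) (N : ℕ) (f : V → ℂ) : Module.Dual Fq V → ℂ :=
  fun α => ((ftNorm Fq N : ℝ) : ℂ)⁻¹ * ∑ v : V, χ (α v) * f v

/-- Normalized Fourier transform of a function on `V*`, valued on `V` (via `V** ≅ V`). -/
noncomputable def FTdual {Fq V : Type*} [Field Fq] [Fintype Fq] [AddCommGroup V] [Module Fq V]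
    [Fintype (Module.Dual Fq V)] (χ : AddChar Fq ℂ) (N : ℕ)
    (h : Module.Dual Fq V → ℂ) : V → ℂ :=
  fun v => ((ftNorm Fq N : ℝ) : ℂ)⁻¹ * ∑ α : Module.Dual Fq V, χ (α v) * h α

/-- The contragredient action of `g` on the dual: `(g • α) = α ∘ ρ(g⁻¹)`. -/
def dAct {Fq V : Type*} [Field Fq] [AddCommGroup V] [Module Fq V] {G : Type*} [Group G]
    (ρ : G →* (V ≃ₗ[Fq] V)) (g : G) (α : Module.Dual Fq V) : Module.Dual Fq V :=
  α ∘ₗ (ρ g⁻¹).toLinearMap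

/-- The `G`-orbit of `α` in `V*` under the contragredient action. -/
def dOrbit {Fq V : Type*} [Field Fq] [AddCommGroup V] [Module Fq V] {G : Type*} [Group G]
    (ρ : G →* (V ≃ₗ[Fq] V)) (α : Module.Dual Fq V) : Set (Module.Dual Fq V) :=
  Set.range fun g => dAct ρ g α

/-- `χ_{O*} = FT(q^{N/2}·1_{-O*})`, the invariant character attached to `O* ⊆ V*`. -/
noncomputable def chiO {Fq V : Type*} [Field Fq] [Fintype Fq] [AddCommGroup V] [Module Fq V]
    [Fintype (Module.Dual Fq V)] (χ : AddChar Fq ℂ) (N : ℕ)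
    (O : Set (Module.Dual Fq V)) : V → ℂ :=
  FTdual χ N fun α => ((ftNorm Fq N : ℝ) : ℂ) * Set.indicator O (fun _ => (1 : ℂ)) (-α)

/-- `f : V → ℂ` is the character of a finite-dimensional complex representation of `(V,+)`. -/
def IsCharFn {V : Type*} [AddCommGroup V] (f : V → ℂ) : Prop :=
  ∃ (d : ℕ) (ρ : Multiplicative V →* Matrix.GeneralLinearGroup (Fin d) ℂ),
    ∀ v : V, f v = Matrix.trace ((ρ (Multiplicative.ofAdd v) : Matrix (Fin d) (Fin d) ℂ))

/-- A `G`-invariant character of `(V,+)`. -/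
def IsInvChar {Fq V : Type*} [Field Fq] [AddCommGroup V] [Module Fq V] {G : Type*} [Group G]
    (ρ : G →* (V ≃ₗ[Fq] V)) (f : V → ℂ) : Prop :=
  IsCharFn f ∧ ∀ (g : G) (v : V), f (ρ g v) = f v

/-- An irreducible `G`-invariant character: a nonzero invariant character that is not the
sum of two nonzero `G`-invariant characters. -/
def IsIrredInvChar {Fq V : Type*} [Field Fq] [AddCommGroup V] [Module Fq V] {G : Type*} [Group G]
    (ρ : G →* (V ≃ₗ[Fq] V)) (f : V → ℂ) : Prop :=
  IsInvChar ρ f ∧ f ≠ 0 ∧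
    ∀ f₁ f₂ : V → ℂ, IsInvChar ρ f₁ → IsInvChar ρ f₂ → f = f₁ + f₂ → f₁ = 0 ∨ f₂ = 0

namespace Stmt4Aux

/-! ### Character functions: closure properties -/

section CharFn

variable {V : Type*} [AddCommGroup V]

lemma trace_fromBlocks {n m : Type*} [Fintype n] [Fintype m]
    (A : Matrix n n ℂ) (B : Matrix n m ℂ) (C : Matrix m n ℂ) (D : Matrix m m ℂ) :
    (Matrix.fromBlocks A B C D).trace = A.trace + D.trace := by
  simp [Matrix.trace, Fintype.sum_sum_type, Matrix.diag]

lemma isCharFn_of_rep {n : Type*} [Fintype n] [DecidableEq n]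
    (ρ : Multiplicative V →* (Matrix n n ℂ)ˣ) (f : V → ℂ)
    (hf : ∀ v, f v = Matrix.trace ((ρ (Multiplicative.ofAdd v) : Matrix n n ℂ))) :
    IsCharFn f := by
  classical
  let e : n ≃ Fin (Fintype.card n) := Fintype.equivFin n
  let φ := Matrix.reindexAlgEquiv ℂ ℂ e
  refine ⟨Fintype.card n, (Units.map φ.toRingEquiv.toMulEquiv.toMonoidHom).comp ρ, fun v => ?_⟩
  rw [hf v]
  show Matrix.trace _ = Matrix.trace ((φ (ρ (Multiplicative.ofAdd v) : Matrix n n ℂ)))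
  simp only [φ, Matrix.reindexAlgEquiv_apply, Matrix.reindex_apply, Matrix.trace,
    Matrix.diag, Matrix.submatrix_apply]
  exact (Equiv.sum_comp e.symm _).symm

lemma isCharFn_zero : IsCharFn (0 : V → ℂ) :=
  ⟨0, 1, fun v => by simp [Matrix.trace]⟩

lemma isCharFn_add {f₁ f₂ : V → ℂ} (h₁ : IsCharFn f₁) (h₂ : IsCharFn f₂) :
    IsCharFn (fun v => f₁ v + f₂ v) := by
  obtain ⟨d₁, ρ₁, hρ₁⟩ := h₁
  obtain ⟨d₂, ρ₂, hρ₂⟩ := h₂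
  let u : Multiplicative V → (Matrix (Fin d₁ ⊕ Fin d₂) (Fin d₁ ⊕ Fin d₂) ℂ)ˣ := fun v =>
    ⟨Matrix.fromBlocks (ρ₁ v) 0 0 (ρ₂ v),
     Matrix.fromBlocks (↑(ρ₁ v)⁻¹) 0 0 (↑(ρ₂ v)⁻¹),
     by rw [Matrix.fromBlocks_multiply]
        simp only [Matrix.mul_zero, Matrix.zero_mul, add_zero, zero_add, Units.mul_inv,
          Units.inv_mul, Matrix.fromBlocks_one],
     by rw [Matrix.fromBlocks_multiply]
        simp only [Matrix.mul_zero, Matrix.zero_mul, add_zero, zero_add, Units.mul_inv,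
          Units.inv_mul, Matrix.fromBlocks_one]⟩
  have hu : ∀ a b, u (a * b) = u a * u b := by
    intro a b
    ext : 1
    show Matrix.fromBlocks _ _ _ _ = Matrix.fromBlocks _ _ _ _ * Matrix.fromBlocks _ _ _ _
    rw [Matrix.fromBlocks_multiply]
    simp
  refine isCharFn_of_rep (MonoidHom.mk' u hu) _ fun v => ?_
  show f₁ v + f₂ v = Matrix.trace (Matrix.fromBlocks _ _ _ _)
  rw [trace_fromBlocks, hρ₁ v, hρ₂ v]

end CharFn


section Fourier

variable {Fq : Type*} [Field Fq] [Fintype Fq]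
variable {V : Type*} [AddCommGroup V] [Module Fq V] [Fintype V] [Fintype (Module.Dual Fq V)]
variable {G : Type*} [Group G]

lemma char_mul_char (χ : AddChar Fq ℂ) (a b : Fq) : χ a * χ b = χ (a + b) :=
  (AddChar.map_add_eq_mul χ a b).symm

lemma sum_char_V (χ : AddChar Fq ℂ) (hχ : ∃ a, χ a ≠ 1) {β : Module.Dual Fq V} (hβ : β ≠ 0) :
    ∑ v : V, χ (β v) = 0 := by
  obtain ⟨a, ha⟩ := hχ
  obtain ⟨v₀, hv₀⟩ : ∃ v, β v ≠ 0 := by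
    by_contra h
    push_neg at h
    exact hβ (LinearMap.ext fun v => by simpa using h v)
  have key : (χ.compAddMonoidHom β.toAddMonoidHom : AddChar V ℂ) ≠ 0 := by
    intro h
    have h2 := DFunLike.congr_fun h ((a * (β v₀)⁻¹) • v₀)
    simp only [AddChar.compAddMonoidHom_apply, AddChar.zero_apply, LinearMap.toAddMonoidHom_coe,
      map_smul, smul_eq_mul] at h2
    rw [mul_assoc, inv_mul_cancel₀ hv₀, mul_one] at h2
    exact ha h2
  simpa using AddChar.sum_eq_zero_iff_ne_zero.mpr key

lemma sum_char_dual (χ : AddChar Fq ℂ) (hχ : ∃ a, χ a ≠ 1) {v : V} (hv : v ≠ 0) :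
    ∑ γ : Module.Dual Fq V, χ (γ v) = 0 := by
  obtain ⟨a, ha⟩ := hχ
  obtain ⟨φ, hφ⟩ : ∃ φ : Module.Dual Fq V, φ v ≠ 0 := by
    by_contra h
    push_neg at h
    exact hv ((Module.forall_dual_apply_eq_zero_iff Fq v).mp h)
  have key : (χ.compAddMonoidHom (Module.Dual.eval Fq V v).toAddMonoidHom :
      AddChar (Module.Dual Fq V) ℂ) ≠ 0 := by
    intro h
    have h2 := DFunLike.congr_fun h ((a * (φ v)⁻¹) • φ)
    simp only [AddChar.compAddMonoidHom_apply, AddChar.zero_apply, LinearMap.toAddMonoidHom_coe,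
      map_smul, smul_eq_mul, Module.Dual.eval_apply, LinearMap.smul_apply] at h2
    rw [mul_assoc, inv_mul_cancel₀ hφ, mul_one] at h2
    exact ha h2
  simpa using AddChar.sum_eq_zero_iff_ne_zero.mpr key

lemma card_dual : Fintype.card (Module.Dual Fq V) = Fintype.card V :=
  (Fintype.card_congr (Module.finBasis Fq V).toDualEquiv.toEquiv).symm

lemma sum_char_pair (χ : AddChar Fq ℂ) (hχ : ∃ a, χ a ≠ 1) (β γ : Module.Dual Fq V) :
    ∑ v : V, χ (β v) * χ (-(γ v)) = if β = γ then (Fintype.card V : ℂ) else 0 := by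
  have h : ∀ v, χ (β v) * χ (-(γ v)) = χ ((β - γ) v) := fun v => by
    rw [char_mul_char, LinearMap.sub_apply]; ring_nf
  simp_rw [h]
  split_ifs with hbg
  · subst hbg
    simp
  · exact sum_char_V χ hχ (sub_ne_zero.mpr hbg)

lemma sum_char_dual_pair (χ : AddChar Fq ℂ) (hχ : ∃ a, χ a ≠ 1) (v w : V) :
    ∑ γ : Module.Dual Fq V, χ (-(γ w)) * χ (γ v) =
      if w = v then (Fintype.card V : ℂ) else 0 := by
  have h : ∀ γ : Module.Dual Fq V, χ (-(γ w)) * χ (γ v) = χ (γ (v - w)) := fun γ => by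
    rw [char_mul_char, map_sub]; ring_nf
  simp_rw [h]
  split_ifs with hwv
  · subst hwv
    simp [card_dual (Fq := Fq) (V := V)]
  · exact sum_char_dual χ hχ (sub_ne_zero.mpr (Ne.symm hwv))

/-- Normalized Fourier coefficient of `f` at `γ`. -/
noncomputable def fCoeff (χ : AddChar Fq ℂ) (f : V → ℂ) (γ : Module.Dual Fq V) : ℂ :=
  (Fintype.card V : ℂ)⁻¹ * ∑ v : V, f v * χ (-(γ v))

lemma cardV_ne_zero : (Fintype.card V : ℂ) ≠ 0 :=
  Nat.cast_ne_zero.mpr Fintype.card_ne_zero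

lemma fCoeff_combo (χ : AddChar Fq ℂ) (hχ : ∃ a, χ a ≠ 1) (c : Module.Dual Fq V → ℂ)
    (γ : Module.Dual Fq V) :
    fCoeff χ (fun v => ∑ δ : Module.Dual Fq V, c δ * χ (δ v)) γ = c γ := by
  unfold fCoeff
  have h1 : ∀ v : V, (∑ δ : Module.Dual Fq V, c δ * χ (δ v)) * χ (-(γ v)) =
      ∑ δ : Module.Dual Fq V, c δ * (χ (δ v) * χ (-(γ v))) := by
    intro v
    rw [Finset.sum_mul]
    exact Finset.sum_congr rfl fun δ _ => by ring
  simp_rw [h1]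
  rw [Finset.sum_comm]
  have h2 : ∀ δ : Module.Dual Fq V, (∑ v : V, c δ * (χ (δ v) * χ (-(γ v)))) =
      c δ * ∑ v : V, χ (δ v) * χ (-(γ v)) := fun δ => by rw [Finset.mul_sum]
  simp_rw [h2, sum_char_pair χ hχ, mul_ite, mul_zero]
  rw [Finset.sum_ite_eq' Finset.univ γ (fun δ => c δ * (Fintype.card V : ℂ))]
  simp only [Finset.mem_univ, if_true]
  rw [mul_comm (c γ), ← mul_assoc, inv_mul_cancel₀ (cardV_ne_zero (V := V)), one_mul]

lemma fourier_inversion (χ : AddChar Fq ℂ) (hχ : ∃ a, χ a ≠ 1) (f : V → ℂ) (v : V) :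
    f v = ∑ γ : Module.Dual Fq V, fCoeff χ f γ * χ (γ v) := by
  unfold fCoeff
  have h1 : ∀ γ : Module.Dual Fq V,
      ((Fintype.card V : ℂ)⁻¹ * ∑ w : V, f w * χ (-(γ w))) * χ (γ v) =
      (Fintype.card V : ℂ)⁻¹ * ∑ w : V, f w * (χ (-(γ w)) * χ (γ v)) := by
    intro γ
    rw [mul_assoc, Finset.sum_mul]
    congr 1
    exact Finset.sum_congr rfl fun w _ => by ring
  simp_rw [h1]
  rw [← Finset.mul_sum, Finset.sum_comm]
  have h2 : ∀ w : V, (∑ γ : Module.Dual Fq V, f w * (χ (-(γ w)) * χ (γ v))) =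
      f w * (if w = v then (Fintype.card V : ℂ) else 0) := fun w => by
    rw [← Finset.mul_sum, sum_char_dual_pair χ hχ]
  simp_rw [h2, mul_ite, mul_zero]
  rw [Finset.sum_ite_eq' Finset.univ v (fun w => f w * (Fintype.card V : ℂ))]
  simp only [Finset.mem_univ, if_true]
  rw [mul_comm (f v), ← mul_assoc, inv_mul_cancel₀ (cardV_ne_zero (V := V)), one_mul]

lemma eq_zero_of_fCoeff (χ : AddChar Fq ℂ) (hχ : ∃ a, χ a ≠ 1) (f : V → ℂ)
    (h : ∀ γ, fCoeff χ f γ = 0) : f = 0 := by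
  funext v
  rw [Pi.zero_apply, fourier_inversion χ hχ f v]
  simp [h]

lemma fCoeff_zero (χ : AddChar Fq ℂ) (γ : Module.Dual Fq V) :
    fCoeff χ (0 : V → ℂ) γ = 0 := by
  unfold fCoeff
  simp

lemma fCoeff_add (χ : AddChar Fq ℂ) (f₁ f₂ : V → ℂ) (γ : Module.Dual Fq V) :
    fCoeff χ (f₁ + f₂) γ = fCoeff χ f₁ γ + fCoeff χ f₂ γ := by
  unfold fCoeff
  rw [← mul_add, ← Finset.sum_add_distrib]
  congr 1
  exact Finset.sum_congr rfl fun v _ => by simp [add_mul]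

/-! ### The contragredient action -/

lemma dAct_apply (ρ : G →* (V ≃ₗ[Fq] V)) (g : G) (γ : Module.Dual Fq V) (v : V) :
    dAct ρ g γ v = γ ((ρ g⁻¹) v) := rfl

lemma rho_mul_apply (ρ : G →* (V ≃ₗ[Fq] V)) (g h : G) (v : V) :
    (ρ g) ((ρ h) v) = (ρ (g * h)) v := by
  rw [map_mul]; rfl

lemma rho_inv_apply (ρ : G →* (V ≃ₗ[Fq] V)) (g : G) (v : V) : (ρ g⁻¹) ((ρ g) v) = v := by
  rw [rho_mul_apply, inv_mul_cancel, map_one]; rfl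

lemma dAct_one (ρ : G →* (V ≃ₗ[Fq] V)) (γ : Module.Dual Fq V) : dAct ρ 1 γ = γ := by
  ext v; rw [dAct_apply, inv_one, map_one]; rfl

lemma dAct_mul (ρ : G →* (V ≃ₗ[Fq] V)) (g h : G) (γ : Module.Dual Fq V) :
    dAct ρ g (dAct ρ h γ) = dAct ρ (g * h) γ := by
  ext v
  rw [dAct_apply, dAct_apply, dAct_apply, rho_mul_apply, ← mul_inv_rev]

lemma dAct_inv_dAct (ρ : G →* (V ≃ₗ[Fq] V)) (g : G) (γ : Module.Dual Fq V) :
    dAct ρ g⁻¹ (dAct ρ g γ) = γ := by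
  rw [dAct_mul, inv_mul_cancel, dAct_one]

lemma dAct_dAct_inv (ρ : G →* (V ≃ₗ[Fq] V)) (g : G) (γ : Module.Dual Fq V) :
    dAct ρ g (dAct ρ g⁻¹ γ) = γ := by
  rw [dAct_mul, mul_inv_cancel, dAct_one]

noncomputable def dActEquiv (ρ : G →* (V ≃ₗ[Fq] V)) (g : G) :
    Module.Dual Fq V ≃ Module.Dual Fq V where
  toFun := dAct ρ g
  invFun := dAct ρ g⁻¹
  left_inv := fun γ => dAct_inv_dAct ρ g γ
  right_inv := fun γ => dAct_dAct_inv ρ g γ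

lemma dAct_neg (ρ : G →* (V ≃ₗ[Fq] V)) (g : G) (γ : Module.Dual Fq V) :
    dAct ρ g (-γ) = -(dAct ρ g γ) := by
  ext v; simp [dAct_apply]

lemma mem_dOrbit_self (ρ : G →* (V ≃ₗ[Fq] V)) (α : Module.Dual Fq V) : α ∈ dOrbit ρ α :=
  ⟨1, dAct_one ρ α⟩

lemma dAct_mem_dOrbit (ρ : G →* (V ≃ₗ[Fq] V)) (g : G) {β α : Module.Dual Fq V}
    (h : β ∈ dOrbit ρ α) : dAct ρ g β ∈ dOrbit ρ α := by
  obtain ⟨h₀, rfl⟩ := h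
  exact ⟨g * h₀, (dAct_mul ρ g h₀ α).symm⟩

lemma dAct_mem_dOrbit_iff (ρ : G →* (V ≃ₗ[Fq] V)) (g : G) (β α : Module.Dual Fq V) :
    dAct ρ g β ∈ dOrbit ρ α ↔ β ∈ dOrbit ρ α := by
  constructor
  · intro h
    have := dAct_mem_dOrbit ρ g⁻¹ h
    rwa [dAct_inv_dAct] at this
  · exact dAct_mem_dOrbit ρ g

lemma fCoeff_dAct (χ : AddChar Fq ℂ) (ρ : G →* (V ≃ₗ[Fq] V)) (f : V → ℂ)
    (hf : ∀ (g : G) (v : V), f (ρ g v) = f v) (g : G) (γ : Module.Dual Fq V) :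
    fCoeff χ f (dAct ρ g γ) = fCoeff χ f γ := by
  unfold fCoeff
  congr 1
  refine (Fintype.sum_bijective (ρ g) (ρ g).bijective (fun w => f w * χ (-(γ w)))
    (fun v => f v * χ (-(dAct ρ g γ v))) fun w => ?_).symm
  show f w * χ (-(γ w)) = f ((ρ g) w) * χ (-(dAct ρ g γ ((ρ g) w)))
  rw [dAct_apply, rho_inv_apply, hf g w]

lemma invariant_of_coeffs (χ : AddChar Fq ℂ) (ρ : G →* (V ≃ₗ[Fq] V))
    (c : Module.Dual Fq V → ℂ) (hc : ∀ (g : G) (γ : Module.Dual Fq V), c (dAct ρ g γ) = c γ)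
    (g : G) (v : V) :
    ∑ γ : Module.Dual Fq V, c γ * χ (γ (ρ g v)) = ∑ γ : Module.Dual Fq V, c γ * χ (γ v) := by
  refine (Fintype.sum_equiv (dActEquiv ρ g) (fun δ => c δ * χ (δ v))
    (fun γ => c γ * χ (γ (ρ g v))) fun δ => ?_).symm
  show c δ * χ (δ v) = c (dAct ρ g δ) * χ (dAct ρ g δ (ρ g v))
  rw [hc g δ, dAct_apply, rho_inv_apply]

/-! ### More character functions -/

lemma isCharFn_char (χ : AddChar Fq ℂ) (γ : Module.Dual Fq V) :
    IsCharFn (fun v : V => χ (γ v)) := by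
  have hval : ∀ a : Fq, χ a * χ (-a) = 1 := fun a => by
    rw [← AddChar.map_add_eq_mul]; simp
  have hval' : ∀ a : Fq, χ (-a) * χ a = 1 := fun a => by
    rw [← AddChar.map_add_eq_mul]; simp
  let u : Multiplicative V → ℂˣ := fun v =>
    ⟨χ (γ v.toAdd), χ (-(γ v.toAdd)), hval _, hval' _⟩
  have hu : ∀ a b, u (a * b) = u a * u b := by
    intro a b
    ext
    show χ (γ (a.toAdd + b.toAdd)) = χ (γ a.toAdd) * χ (γ b.toAdd)
    rw [map_add, AddChar.map_add_eq_mul]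
  refine isCharFn_of_rep
    ((Units.map (algebraMap ℂ (Matrix (Fin 1) (Fin 1) ℂ)).toMonoidHom).comp
      (MonoidHom.mk' u hu)) _ fun v => ?_
  show χ (γ v) = Matrix.trace (algebraMap ℂ (Matrix (Fin 1) (Fin 1) ℂ) (χ (γ v)))
  simp [Matrix.trace, Matrix.algebraMap_eq_diagonal]

lemma isCharFn_nat_mul_char (χ : AddChar Fq ℂ) (γ : Module.Dual Fq V) (n : ℕ) :
    IsCharFn (fun v : V => (n : ℂ) * χ (γ v)) := by
  induction n with
  | zero => simp; exact isCharFn_zero (V := V)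
  | succ k ih =>
      have h := isCharFn_add ih (isCharFn_char χ γ)
      have heq : (fun v : V => ((k + 1 : ℕ) : ℂ) * χ (γ v)) =
          fun v => (k : ℂ) * χ (γ v) + χ (γ v) := by
        funext v; push_cast; ring
      rw [heq]
      exact h

lemma isCharFn_natCombo (χ : AddChar Fq ℂ) (n : Module.Dual Fq V → ℕ) :
    IsCharFn (fun v : V => ∑ γ : Module.Dual Fq V, (n γ : ℂ) * χ (γ v)) := by
  have key : ∀ s : Finset (Module.Dual Fq V),
      IsCharFn (fun v : V => ∑ γ ∈ s, (n γ : ℂ) * χ (γ v)) := by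
    intro s
    induction s using Finset.induction_on with
    | empty => simp; exact isCharFn_zero (V := V)
    | @insert γ s hγ ih =>
        have h := isCharFn_add (isCharFn_nat_mul_char χ γ (n γ)) ih
        have heq : (fun v : V => ∑ δ ∈ insert γ s, (n δ : ℂ) * χ (δ v)) =
            fun v => (n γ : ℂ) * χ (γ v) + ∑ δ ∈ s, (n δ : ℂ) * χ (δ v) := by
          funext v; rw [Finset.sum_insert hγ]
        rw [heq]
        exact h
  exact key Finset.univ

lemma trace_idem_nat (d : ℕ) (P : Matrix (Fin d) (Fin d) ℂ) (h : P * P = P) :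
    ∃ n : ℕ, P.trace = n := by
  have hp : Matrix.toLin' P ∘ₗ Matrix.toLin' P = Matrix.toLin' P := by
    rw [← Matrix.toLin'_mul, h]
  obtain ⟨p, hpr⟩ := (LinearMap.isProj_iff_isIdempotentElem _).mpr hp
  refine ⟨Module.finrank ℂ p, ?_⟩
  have h2 := hpr.trace
  rw [← h2, LinearMap.trace_eq_matrix_trace ℂ (Pi.basisFun ℂ (Fin d)),
    LinearMap.toMatrix_eq_toMatrix', LinearMap.toMatrix'_toLin']

lemma fCoeff_nat (χ : AddChar Fq ℂ) (f : V → ℂ) (hf : IsCharFn f) (γ : Module.Dual Fq V) :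
    ∃ n : ℕ, fCoeff χ f γ = n := by
  obtain ⟨d, ρ, hρ⟩ := hf
  set M : V → Matrix (Fin d) (Fin d) ℂ :=
    fun v => (ρ (Multiplicative.ofAdd v) : Matrix (Fin d) (Fin d) ℂ) with hM
  have hMmul : ∀ v w : V, M v * M w = M (v + w) := by
    intro v w
    show (ρ (Multiplicative.ofAdd v) : Matrix (Fin d) (Fin d) ℂ) * ρ (Multiplicative.ofAdd w) = _
    rw [← Units.val_mul, ← map_mul]
    rfl
  set S : Matrix (Fin d) (Fin d) ℂ := ∑ v : V, χ (-(γ v)) • M v with hS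
  have hSS : S * S = (Fintype.card V : ℂ) • S := by
    rw [hS, Finset.sum_mul_sum]
    have h1 : ∀ v w : V, (χ (-(γ v)) • M v) * (χ (-(γ w)) • M w)
        = χ (-(γ (v + w))) • M (v + w) := by
      intro v w
      rw [Matrix.smul_mul, Matrix.mul_smul, smul_smul, hMmul, map_add, neg_add,
        AddChar.map_add_eq_mul]
    simp_rw [h1]
    have h2 : ∀ v : V, ∑ w : V, χ (-(γ (v + w))) • M (v + w)
        = ∑ u : V, χ (-(γ u)) • M u := by
      intro v
      exact Fintype.sum_equiv (Equiv.addLeft v) _ _ fun w => rfl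
    simp_rw [h2]
    rw [Finset.sum_const, Finset.card_univ, ← Nat.cast_smul_eq_nsmul ℂ]
  set P : Matrix (Fin d) (Fin d) ℂ := (Fintype.card V : ℂ)⁻¹ • S with hP
  have hPP : P * P = P := by
    rw [hP, Matrix.smul_mul, Matrix.mul_smul, smul_smul, hSS, smul_smul, mul_assoc,
      inv_mul_cancel₀ (cardV_ne_zero (V := V)), mul_one]
  obtain ⟨n, hn⟩ := trace_idem_nat d P hPP
  refine ⟨n, ?_⟩
  rw [← hn, hP, Matrix.trace_smul, hS, Matrix.trace_sum]
  unfold fCoeff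
  rw [smul_eq_mul]
  congr 1
  refine Finset.sum_congr rfl fun v _ => ?_
  rw [Matrix.trace_smul, smul_eq_mul, hρ v, mul_comm]

/-! ### `chiO` as a sum of characters -/

lemma ftNorm_ne_zero (N : ℕ) : ((ftNorm Fq N : ℝ) : ℂ) ≠ 0 := by
  have h0 : (0:ℝ) < Real.sqrt (Fintype.card Fq) ^ N :=
    pow_pos (Real.sqrt_pos.mpr (by exact_mod_cast Fintype.card_pos)) N
  exact_mod_cast ne_of_gt h0

lemma chiO_eq (χ : AddChar Fq ℂ) (N : ℕ) (O : Set (Module.Dual Fq V)) :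
    chiO χ N O = fun v => ∑ γ : Module.Dual Fq V,
      Set.indicator O (fun _ => (1 : ℂ)) (-γ) * χ (γ v) := by
  funext v
  unfold chiO FTdual
  set c : ℂ := ((ftNorm Fq N : ℝ) : ℂ) with hc
  have h1 : ∀ γ : Module.Dual Fq V,
      χ (γ v) * (c * Set.indicator O (fun _ => (1 : ℂ)) (-γ))
      = c * (Set.indicator O (fun _ => (1 : ℂ)) (-γ) * χ (γ v)) := fun γ => by ring
  simp_rw [h1, ← Finset.mul_sum, ← mul_assoc, inv_mul_cancel₀ (show c ≠ 0 from ftNorm_ne_zero (Fq := Fq) N),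
    one_mul]

end Fourier

end Stmt4Aux

open Stmt4Aux in
theorem stmt4 (Fq : Type*) [Field Fq] [Fintype Fq]
    (χ : AddChar Fq ℂ) (hχ : ∃ a, χ a ≠ 1)
    (V : Type*) [AddCommGroup V] [Module Fq V] [Fintype V] [Fintype (Module.Dual Fq V)]
    (N : ℕ) (hN : Module.finrank Fq V = N)
    (G : Type*) [Group G] [Fintype G] (ρ : G →* (V ≃ₗ[Fq] V)) :
    (∀ α : Module.Dual Fq V, IsIrredInvChar ρ (chiO χ N (dOrbit ρ α))) ∧
    (∀ α β : Module.Dual Fq V,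
        chiO χ N (dOrbit ρ α) = chiO χ N (dOrbit ρ β) → dOrbit ρ α = dOrbit ρ β) ∧
    (∀ f : V → ℂ, IsIrredInvChar ρ f →
        ∃ α : Module.Dual Fq V, f = chiO χ N (dOrbit ρ α)) := by
  classical
  -- the coefficient function of an orbit, as indicator and as natural number
  set ind : Set (Module.Dual Fq V) → Module.Dual Fq V → ℂ :=
    fun O γ => Set.indicator O (fun _ => (1 : ℂ)) (-γ) with hind_def
  have hind_nat : ∀ (O : Set (Module.Dual Fq V)) (γ : Module.Dual Fq V),
      ind O γ = (((if -γ ∈ O then 1 else 0 : ℕ) : ℂ)) := by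
    intro O γ
    by_cases h : -γ ∈ O <;> simp [hind_def, h]
  have hchiO : ∀ O : Set (Module.Dual Fq V),
      chiO χ N O = fun v => ∑ γ : Module.Dual Fq V, ind O γ * χ (γ v) :=
    fun O => chiO_eq χ N O
  have hcoeff_chiO : ∀ (O : Set (Module.Dual Fq V)) (γ : Module.Dual Fq V),
      fCoeff χ (chiO χ N O) γ = ind O γ := by
    intro O γ
    rw [hchiO O]
    exact fCoeff_combo χ hχ _ γ
  -- the orbit indicator is constant along the action
  have hind_act : ∀ (α : Module.Dual Fq V) (g : G) (γ : Module.Dual Fq V),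
      ind (dOrbit ρ α) (dAct ρ g γ) = ind (dOrbit ρ α) γ := by
    intro α g γ
    simp only [hind_def]
    rw [← dAct_neg]
    by_cases h : -γ ∈ dOrbit ρ α
    · rw [Set.indicator_of_mem ((dAct_mem_dOrbit_iff ρ g _ α).mpr h), Set.indicator_of_mem h]
    · rw [Set.indicator_of_notMem (fun hm => h ((dAct_mem_dOrbit_iff ρ g _ α).mp hm)),
        Set.indicator_of_notMem h]
  -- chiO of an orbit is an invariant character
  have hinv_chiO : ∀ α : Module.Dual Fq V, IsInvChar ρ (chiO χ N (dOrbit ρ α)) := by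
    intro α
    constructor
    · rw [hchiO]
      have heq : (fun v => ∑ γ : Module.Dual Fq V, ind (dOrbit ρ α) γ * χ (γ v)) =
          fun v => ∑ γ : Module.Dual Fq V,
            (((if -γ ∈ dOrbit ρ α then 1 else 0 : ℕ) : ℂ)) * χ (γ v) := by
        funext v
        exact Finset.sum_congr rfl fun γ _ => by rw [hind_nat]
      rw [heq]
      exact isCharFn_natCombo χ _
    · intro g v
      rw [hchiO]
      exact invariant_of_coeffs χ ρ _ (fun g γ => hind_act α g γ) g v
  -- chiO of an orbit is nonzero
  have hne_chiO : ∀ α : Module.Dual Fq V, chiO χ N (dOrbit ρ α) ≠ 0 := by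
    intro α h0
    have h1 := hcoeff_chiO (dOrbit ρ α) (-α)
    rw [h0, fCoeff_zero] at h1
    simp only [hind_def, neg_neg] at h1
    rw [Set.indicator_of_mem (mem_dOrbit_self ρ α)] at h1
    exact one_ne_zero h1.symm
  -- elements whose negative is in the orbit of α are acted versions of -α
  have horb : ∀ (α γ : Module.Dual Fq V), -γ ∈ dOrbit ρ α → ∃ g : G, γ = dAct ρ g (-α) := by
    rintro α γ ⟨g, hg⟩
    refine ⟨g, ?_⟩
    have hg' : dAct ρ g α = -γ := hg
    rw [dAct_neg, hg', neg_neg]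
  -- Part 1: irreducibility
  have hirr : ∀ α : Module.Dual Fq V, IsIrredInvChar ρ (chiO χ N (dOrbit ρ α)) := by
    intro α
    refine ⟨hinv_chiO α, hne_chiO α, ?_⟩
    intro f₁ f₂ h₁ h₂ heq
    choose n₁ hn₁ using fun γ => fCoeff_nat χ f₁ h₁.1 γ
    choose n₂ hn₂ using fun γ => fCoeff_nat χ f₂ h₂.1 γ
    have hadd : ∀ γ : Module.Dual Fq V,
        ((n₁ γ : ℂ)) + ((n₂ γ : ℂ)) = ind (dOrbit ρ α) γ := by
      intro γ
      rw [← hn₁, ← hn₂, ← fCoeff_add, ← heq, hcoeff_chiO]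
    have hconst₁ : ∀ (g : G) (γ : Module.Dual Fq V), n₁ (dAct ρ g γ) = n₁ γ := by
      intro g γ
      have h := fCoeff_dAct χ ρ f₁ h₁.2 g γ
      rw [hn₁, hn₁] at h
      exact_mod_cast h
    have hconst₂ : ∀ (g : G) (γ : Module.Dual Fq V), n₂ (dAct ρ g γ) = n₂ γ := by
      intro g γ
      have h := fCoeff_dAct χ ρ f₂ h₂.2 g γ
      rw [hn₂, hn₂] at h
      exact_mod_cast h
    have hzero : ∀ γ : Module.Dual Fq V, -γ ∉ dOrbit ρ α → n₁ γ = 0 ∧ n₂ γ = 0 := by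
      intro γ h
      have hγ := hadd γ
      rw [hind_nat, if_neg h] at hγ
      have hγ' : n₁ γ + n₂ γ = 0 := by exact_mod_cast hγ
      omega
    have hone : ∀ γ : Module.Dual Fq V, -γ ∈ dOrbit ρ α → n₁ γ + n₂ γ = 1 := by
      intro γ h
      have hγ := hadd γ
      rw [hind_nat, if_pos h] at hγ
      exact_mod_cast hγ
    have hmem : -(-α) ∈ dOrbit ρ α := by rw [neg_neg]; exact mem_dOrbit_self ρ α
    have h1 := hone (-α) hmem
    by_cases hc1 : n₁ (-α) = 0
    · left
      apply eq_zero_of_fCoeff χ hχ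
      intro γ
      rw [hn₁ γ]
      by_cases hm : -γ ∈ dOrbit ρ α
      · obtain ⟨g, rfl⟩ := horb α γ hm
        rw [hconst₁, hc1]
        norm_num
      · rw [(hzero γ hm).1]
        norm_num
    · right
      have hc2 : n₂ (-α) = 0 := by omega
      apply eq_zero_of_fCoeff χ hχ
      intro γ
      rw [hn₂ γ]
      by_cases hm : -γ ∈ dOrbit ρ α
      · obtain ⟨g, rfl⟩ := horb α γ hm
        rw [hconst₂, hc2]
        norm_num
      · rw [(hzero γ hm).2]
        norm_num
  refine ⟨hirr, ?_, ?_⟩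
  -- Part 2: injectivity
  · intro α β h
    ext δ
    have h1 := hcoeff_chiO (dOrbit ρ α) (-δ)
    have h2 := hcoeff_chiO (dOrbit ρ β) (-δ)
    rw [h] at h1
    have h3 : ind (dOrbit ρ α) (-δ) = ind (dOrbit ρ β) (-δ) := by rw [← h1, ← h2]
    rw [hind_nat, hind_nat, neg_neg] at h3
    constructor <;> intro hm
    · by_contra hm2
      rw [if_pos hm, if_neg hm2] at h3
      norm_num at h3
    · by_contra hm2
      rw [if_neg hm2, if_pos hm] at h3
      norm_num at h3
  -- Part 3: surjectivity
  · rintro f ⟨⟨hfchar, hfinv⟩, hfne, hfind⟩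
    choose nf hnf using fun γ => fCoeff_nat χ f hfchar γ
    have hnf_const : ∀ (g : G) (γ : Module.Dual Fq V), nf (dAct ρ g γ) = nf γ := by
      intro g γ
      have h := fCoeff_dAct χ ρ f hfinv g γ
      rw [hnf, hnf] at h
      exact_mod_cast h
    obtain ⟨γ₀, hγ₀⟩ : ∃ γ₀ : Module.Dual Fq V, nf γ₀ ≠ 0 := by
      by_contra h
      push_neg at h
      exact hfne (eq_zero_of_fCoeff χ hχ f fun γ => by rw [hnf γ, h γ]; norm_num)
    refine ⟨-γ₀, ?_⟩
    set O : Set (Module.Dual Fq V) := dOrbit ρ (-γ₀) with hO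
    have hind_actO : ∀ (g : G) (γ : Module.Dual Fq V), ind O (dAct ρ g γ) = ind O γ :=
      fun g γ => hind_act (-γ₀) g γ
    -- on the orbit, nf is at least one
    have hge : ∀ γ : Module.Dual Fq V, -γ ∈ O → 1 ≤ nf γ := by
      intro γ hm
      obtain ⟨g, rfl⟩ := horb (-γ₀) γ hm
      rw [neg_neg, hnf_const]
      omega
    -- the complementary coefficients
    set m : Module.Dual Fq V → ℕ := fun γ => nf γ - (if -γ ∈ O then 1 else 0) with hm_def
    have hm_cast : ∀ γ : Module.Dual Fq V, ((m γ : ℂ)) = ((nf γ : ℂ)) - ind O γ := by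
      intro γ
      rw [hind_nat]
      simp only [hm_def]
      by_cases h : -γ ∈ O
      · rw [if_pos h, Nat.cast_sub (hge γ h)]
      · rw [if_neg h]
        simp
    have hm_const : ∀ (g : G) (γ : Module.Dual Fq V), ((m (dAct ρ g γ) : ℂ)) = ((m γ : ℂ)) := by
      intro g γ
      rw [hm_cast, hm_cast, ← hind_actO g γ, hnf_const]
    set f₂ : V → ℂ := fun v => ∑ γ : Module.Dual Fq V, ((m γ : ℂ)) * χ (γ v) with hf₂
    have hf₂char : IsCharFn f₂ := isCharFn_natCombo χ m
    have hf₂inv : ∀ (g : G) (v : V), f₂ (ρ g v) = f₂ v := by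
      intro g v
      exact invariant_of_coeffs χ ρ _ (fun g γ => hm_const g γ) g v
    have hsplit : f = chiO χ N O + f₂ := by
      funext v
      rw [Pi.add_apply, fourier_inversion χ hχ f v, hchiO O, hf₂]
      rw [← Finset.sum_add_distrib]
      refine Finset.sum_congr rfl fun γ _ => ?_
      rw [hnf γ, hm_cast γ]
      ring
    rcases hfind (chiO χ N O) f₂ (hinv_chiO (-γ₀)) ⟨hf₂char, hf₂inv⟩ hsplit with h0 | h0
    · exact absurd h0 (hne_chiO (-γ₀))
    · rw [hsplit, h0, add_zero]
end

section
/- Let g be a finite-dimensional Lie algebra over a field of characteristic zero, (e,h,f) an sl2-triple, and let g(j) denote the j-eigenspace of ad(h). Suppose ad(h) acts semisimply with integer eigenvalues. Then for any element W ∈ g with W = W(≤0) + W(>0) its decomposition into nonpositive and positive ad(h)-weight components, and any Z ∈ ⊕_{j≤0} g(j), there exists u ∈ g such that [e + Z, u] ≡ W(>0) modulo ⊕_{j≤0} g(j), provided ad(e): g(j) → g(j+2) is surjective for j ≥ 0. -/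
section Aux
variable {K L : Type*} [Field K] [CharZero K] [LieRing L] [LieAlgebra K L]

/-- graded pieces vanish above some bound -/
lemma aux_vanish [Module.Finite K L] (h : L) (gr : ℤ → Submodule K L)
    (hgr : ∀ j : ℤ, gr j = Module.End.eigenspace (LieAlgebra.ad K L h) (j : K)) :
    ∃ N : ℕ, ∀ j : ℤ, (N : ℤ) < j → gr j = ⊥ := by
  have hne : minpoly K (LieAlgebra.ad K L h) ≠ 0 :=
    minpoly.ne_zero (Algebra.IsIntegral.isIntegral (R := K) _)
  have hroots : {x : K | (minpoly K (LieAlgebra.ad K L h)).IsRoot x}.Finite :=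
    Polynomial.finite_setOf_isRoot hne
  have hSfin : {j : ℤ | gr j ≠ ⊥}.Finite := by
    apply Set.Finite.subset (hroots.preimage (Set.injOn_of_injective Int.cast_injective))
    intro j hj
    simp only [Set.mem_setOf_eq] at hj ⊢
    have : Module.End.HasEigenvalue (LieAlgebra.ad K L h) ((j : K)) := by
      rw [Module.End.hasEigenvalue_iff]
      rw [hgr j] at hj
      exact hj
    exact Module.End.isRoot_of_hasEigenvalue this
  obtain ⟨B, hB⟩ := hSfin.bddAbove
  refine ⟨B.toNat, fun j hj => ?_⟩
  by_contra hne'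
  have := hB (Set.mem_setOf_eq ▸ hne' : j ∈ {j : ℤ | gr j ≠ ⊥})
  omega

/-- D n : sum of graded pieces of degree ≤ n -/
def Dsub (gr : ℤ → Submodule K L) (n : ℤ) : Submodule K L :=
  ⨆ j : ℤ, ⨆ _ : j ≤ n, gr j

lemma gr_le_Dsub (gr : ℤ → Submodule K L) {j n : ℤ} (hj : j ≤ n) : gr j ≤ Dsub gr n :=
  le_iSup_of_le j (le_iSup_of_le hj le_rfl)

lemma Dsub_mono (gr : ℤ → Submodule K L) {m n : ℤ} (hmn : m ≤ n) : Dsub gr m ≤ Dsub gr n :=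
  iSup₂_le fun j hj => gr_le_Dsub gr (hj.trans hmn)

lemma Dsub_induction (gr : ℤ → Submodule K L) {n : ℤ} {C : L → Prop} {x : L}
    (hx : x ∈ Dsub gr n) (mem : ∀ j ≤ n, ∀ y ∈ gr j, C y) (zero : C 0)
    (add : ∀ y z, C y → C z → C (y + z)) : C x := by
  refine Submodule.iSup_induction (motive := C) (fun j : ℤ => ⨆ _ : j ≤ n, gr j) hx ?_ zero add
  intro j y hy
  have hy' : y ∈ ⨆ _ : j ≤ n, gr j := hy
  by_cases hj : j ≤ n
  · rw [iSup_pos hj] at hy'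
    exact mem j hj y hy'
  · rw [iSup_neg hj, Submodule.mem_bot] at hy'
    exact hy' ▸ zero

lemma Dsub_bracket (gr : ℤ → Submodule K L)
    (hbr : ∀ (i j : ℤ), ∀ x ∈ gr i, ∀ y ∈ gr j, ⁅x, y⁆ ∈ gr (i + j))
    {a b : ℤ} {x y : L} (hx : x ∈ Dsub gr a) (hy : y ∈ Dsub gr b) :
    ⁅x, y⁆ ∈ Dsub gr (a + b) := by
  refine Dsub_induction (C := fun x => ⁅x, y⁆ ∈ Dsub gr (a + b)) gr hx
    (fun i hi z hz => ?_) (by simp) (fun z w hz hw => by show ⁅z + w, y⁆ ∈ _; rw [add_lie]; exact add_mem hz hw)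
  refine Dsub_induction (C := fun w => ⁅z, w⁆ ∈ Dsub gr (a + b)) gr hy
    (fun j hj w hw => ?_) (by simp) (fun w v hw hv => by show ⁅z, w + v⁆ ∈ _; rw [lie_add]; exact add_mem hw hv)
  exact gr_le_Dsub gr (add_le_add hi hj) (hbr i j z hz w hw)

end Aux

section Gr1
variable {K L : Type*} [Field K] [CharZero K] [LieRing L] [LieAlgebra K L]

lemma aux_comm' (e h f : L)
    (h2 : ⁅h, f⁆ = -((2 : K) • f)) (h3 : ⁅e, f⁆ = h) :
    ∀ (k : ℕ) (c : K) (X : L), ⁅h, X⁆ = c • X →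
      ⁅e, ((LieAlgebra.ad K L f ^ (k+1)) X)⁆
        = (LieAlgebra.ad K L f ^ (k+1)) ⁅e, X⁆
          + (((k:K)+1) * (c - (k:K))) • (LieAlgebra.ad K L f ^ k) X := by
  set F := LieAlgebra.ad K L f with hF
  have hFapp : ∀ x : L, F x = ⁅f, x⁆ := fun x => rfl
  have hpow : ∀ (m : ℕ) (x : L), (F ^ (m+1)) x = (F ^ m) (F x) := by
    intro m x; rw [pow_succ, Module.End.mul_apply]
  have base : ∀ (c : K) (X : L), ⁅h, X⁆ = c • X → ⁅e, F X⁆ = F ⁅e, X⁆ + c • X := by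
    intro c X hX
    rw [hFapp, hFapp, leibniz_lie, h3, hX, add_comm]
  intro k
  induction k with
  | zero =>
    intro c X hX
    simpa [hpow, pow_zero] using base c X hX
  | succ k ih =>
    intro c X hX
    have hY : ⁅h, F X⁆ = (c - 2) • F X := by
      rw [hFapp, leibniz_lie, h2, hX, lie_smul, neg_lie, smul_lie]
      module
    have key := ih (c - 2) (F X) hY
    have hEY : ⁅e, F X⁆ = F ⁅e, X⁆ + c • X := base c X hX
    have key2 : ⁅e, (F ^ (k+2)) X⁆
        = (F ^ (k+1)) (F ⁅e, X⁆ + c • X) + (((k:K)+1)*(c-2-(k:K))) • (F ^ (k+1)) X := by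
      rw [hpow (k+1) X, key, hEY, ← hpow k X]
    rw [show k + 1 + 1 = k + 2 from rfl, key2, map_add, map_smul, ← hpow (k+1) ⁅e, X⁆]
    push_cast
    module

lemma aux_gr1 [Module.Finite K L] (e h f : L)
    (h1 : ⁅h, e⁆ = (2 : K) • e) (h2 : ⁅h, f⁆ = -((2 : K) • f)) (h3 : ⁅e, f⁆ = h)
    (gr : ℤ → Submodule K L)
    (hgr : ∀ j : ℤ, gr j = Module.End.eigenspace (LieAlgebra.ad K L h) (j : K))
    (hbr : ∀ (i j : ℤ), ∀ x ∈ gr i, ∀ y ∈ gr j, ⁅x, y⁆ ∈ gr (i + j)) :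
    gr 1 ≤ Submodule.map (LieAlgebra.ad K L e) (gr (-1)) := by
  set F := LieAlgebra.ad K L f with hF
  set T := Submodule.map (LieAlgebra.ad K L e) (gr (-1)) with hT
  have mem_gr : ∀ (j : ℤ) (x : L), x ∈ gr j ↔ ⁅h, x⁆ = (j : K) • x := by
    intro j x
    rw [hgr]
    exact Module.End.mem_eigenspace_iff
  have he2 : e ∈ gr 2 := by
    rw [mem_gr, h1]; norm_num
  have hf2 : f ∈ gr (-2) := by
    rw [mem_gr, h2]; push_cast; module
  have hpow : ∀ (m : ℕ) (x : L), (F ^ (m+1)) x = (F ^ m) (F x) := by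
    intro m x; rw [pow_succ, Module.End.mul_apply]
  have hFk : ∀ (m : ℕ) (j : ℤ) (x : L), x ∈ gr j → (F ^ m) x ∈ gr (j - 2 * m) := by
    intro m
    induction m with
    | zero => intro j x hx; simpa using hx
    | succ m ih =>
      intro j x hx
      have hfx : F x ∈ gr (-2 + j) := hbr (-2) j f hf2 x hx
      have := ih (-2 + j) (F x) hfx
      rw [hpow]
      convert this using 2
      push_cast; ring
  obtain ⟨N, hvan⟩ := aux_vanish h gr hgr
  have hstep : ∀ (d k : ℕ) (X : L), X ∈ gr (2 * k + 1) → gr (2 * (k + d) + 1) = ⊥ →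
      (F ^ k) X ∈ T := by
    intro d
    induction d with
    | zero =>
      intro k X hX hbot
      have : X = 0 := by
        norm_num at hbot
        simpa [hbot] using hX
      simp [this]
    | succ d ih =>
      intro k X hX hbot
      have hEX : ⁅e, X⁆ ∈ gr (2 * ((k : ℤ) + 1) + 1) := by
        have := hbr 2 (2 * k + 1) e he2 X hX
        convert this using 2
        ring
      have hmemT1 : (F ^ (k+1)) ⁅e, X⁆ ∈ T := by
        have := ih (k + 1) ⁅e, X⁆ (by convert hEX using 2 <;> (push_cast; try ring))
          (by convert hbot using 3 <;> (push_cast; try ring))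
        exact this
      have hXm : (F ^ (k+1)) X ∈ gr (-1) := by
        have := hFk (k+1) (2 * k + 1) X hX
        convert this using 2
        push_cast; ring
      have hmemT2 : ⁅e, (F ^ (k+1)) X⁆ ∈ T :=
        Submodule.mem_map_of_mem hXm
      have hc : ⁅h, X⁆ = ((2 * (k : K) + 1)) • X := by
        have := (mem_gr (2 * k + 1) X).1 hX
        convert this using 2
        push_cast; ring
      have comm := aux_comm' e h f h2 h3 k (2 * (k : K) + 1) X hc
      have hcoef : (((k:K)+1) * ((2 * (k : K) + 1) - (k:K))) = ((k:K)+1) * ((k:K)+1) := by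
        ring
      have hkey : (((k:K)+1) * ((k:K)+1)) • (F ^ k) X
          = ⁅e, (F ^ (k+1)) X⁆ - (F ^ (k+1)) ⁅e, X⁆ := by
        rw [comm, hcoef]
        abel
      have hne : (((k:K)+1) * ((k:K)+1)) ≠ 0 := by
        have : ((k:K) + 1) ≠ 0 := by
          exact_mod_cast Nat.cast_add_one_ne_zero (R := K) k
        exact mul_ne_zero this this
      have : (F ^ k) X = (((k:K)+1) * ((k:K)+1))⁻¹ •
          (⁅e, (F ^ (k+1)) X⁆ - (F ^ (k+1)) ⁅e, X⁆) := by
        rw [← hkey, smul_smul, inv_mul_cancel₀ hne, one_smul]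
      rw [this]
      exact Submodule.smul_mem _ _ (sub_mem hmemT2 hmemT1)
  intro X hX
  have hX' : X ∈ gr (2 * (0:ℕ) + 1) := by norm_num; exact hX
  have hbot : gr (2 * ((0:ℕ) + ((N+1):ℕ)) + 1) = ⊥ := by
    apply hvan
    push_cast; omega
  have := hstep (N+1) 0 X hX' hbot
  simpa using this
end Gr1

theorem stmt14 (K L : Type*) [Field K] [CharZero K] [LieRing L] [LieAlgebra K L]
    [Module.Finite K L]
    (e h f : L)
    (h1 : ⁅h, e⁆ = (2 : K) • e) (h2 : ⁅h, f⁆ = -((2 : K) • f)) (h3 : ⁅e, f⁆ = h)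
    (gr : ℤ → Submodule K L)
    (hgr : ∀ j : ℤ, gr j = Module.End.eigenspace (LieAlgebra.ad K L h) (j : K))
    (hbr : ∀ (i j : ℤ), ∀ x ∈ gr i, ∀ y ∈ gr j, ⁅x, y⁆ ∈ gr (i + j))
    (hsup : (⨆ j : ℤ, gr j) = ⊤)
    (hsurj : ∀ j : ℤ, 0 ≤ j → ∀ y ∈ gr (j + 2), ∃ x ∈ gr j, ⁅e, x⁆ = y)
    (Npos Nneg : Submodule K L)
    (hNpos : Npos = ⨆ j : ℤ, ⨆ _ : 0 < j, gr j)
    (hNneg : Nneg = ⨆ j : ℤ, ⨆ _ : j ≤ 0, gr j)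
    (Z : L) (hZ : Z ∈ Nneg)
    (W Wneg Wpos : L) (hWn : Wneg ∈ Nneg) (hWp : Wpos ∈ Npos) (hW : W = Wneg + Wpos) :
    ∃ u : L, ⁅e + Z, u⁆ - Wpos ∈ Nneg := by
  obtain ⟨N, hvan⟩ := aux_vanish h gr hgr
  have hNnegD : Nneg = Dsub gr 0 := hNneg
  have hZD : Z ∈ Dsub gr 0 := hNnegD ▸ hZ
  have hT := aux_gr1 e h f h1 h2 h3 gr hgr hbr
  have C1 : ∀ n : ℤ, 1 ≤ n → ∀ W' ∈ Dsub gr n,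
      ∃ u ∈ Dsub gr (n - 2), ⁅e + Z, u⁆ - W' ∈ Dsub gr (n - 1) := by
    intro n hn W' hW'
    refine Dsub_induction
      (C := fun W'' => ∃ u ∈ Dsub gr (n - 2), ⁅e + Z, u⁆ - W'' ∈ Dsub gr (n - 1))
      gr hW' ?_ ⟨0, zero_mem _, by simp⟩ ?_
    · intro j hj y hy
      by_cases hjn : j = n
      · subst hjn
        have hx : ∃ x ∈ gr (j - 2), ⁅e, x⁆ = y := by
          by_cases hj1 : j = 1
          · subst hj1
            obtain ⟨x, hx, hxe⟩ := hT hy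
            exact ⟨x, by norm_num; exact hx, hxe⟩
          · have h2j : 2 ≤ j := by omega
            have hy' : y ∈ gr ((j - 2) + 2) := by
              rwa [show j - 2 + 2 = j by ring]
            exact hsurj (j - 2) (by omega) y hy'
        obtain ⟨x, hx2, hxe⟩ := hx
        refine ⟨x, gr_le_Dsub gr le_rfl hx2, ?_⟩
        have heq : ⁅e + Z, x⁆ - y = ⁅Z, x⁆ := by
          rw [add_lie, hxe]; abel
        rw [heq]
        have hZx : ⁅Z, x⁆ ∈ Dsub gr (0 + (j - 2)) :=
          Dsub_bracket gr hbr hZD (gr_le_Dsub gr le_rfl hx2)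
        have hZx' : ⁅Z, x⁆ ∈ Dsub gr (j - 2) := by rwa [zero_add] at hZx
        exact Dsub_mono gr (by omega) hZx'
      · refine ⟨0, zero_mem _, ?_⟩
        have heq : ⁅e + Z, (0:L)⁆ - y = -y := by simp
        rw [heq]
        exact neg_mem (gr_le_Dsub gr (by omega) hy)
    · rintro y z ⟨u1, hu1, he1⟩ ⟨u2, hu2, he2'⟩
      refine ⟨u1 + u2, add_mem hu1 hu2, ?_⟩
      have heq : ⁅e + Z, u1 + u2⁆ - (y + z)
          = (⁅e + Z, u1⁆ - y) + (⁅e + Z, u2⁆ - z) := by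
        rw [lie_add]; abel
      rw [heq]
      exact add_mem he1 he2'
  have C2 : ∀ m : ℕ, ∀ W' ∈ Dsub gr (m : ℤ), ∃ u : L, ⁅e + Z, u⁆ - W' ∈ Dsub gr 0 := by
    intro m
    induction m with
    | zero =>
      intro W' hW'
      exact ⟨0, by simpa using neg_mem hW'⟩
    | succ m ih =>
      intro W' hW'
      push_cast at hW'
      obtain ⟨u1, hu1, herr⟩ := C1 ((m : ℤ) + 1) (by omega) W' hW'
      rw [show (m : ℤ) + 1 - 1 = (m : ℤ) by ring] at herr
      obtain ⟨u2, hu2⟩ := ih (-(⁅e + Z, u1⁆ - W')) (neg_mem herr)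
      refine ⟨u1 + u2, ?_⟩
      have heq : ⁅e + Z, u1 + u2⁆ - W' = ⁅e + Z, u2⁆ - -(⁅e + Z, u1⁆ - W') := by
        rw [lie_add]; abel
      rw [heq]
      exact hu2
  have hWD : Wpos ∈ Dsub gr (N : ℤ) := by
    have hle : Npos ≤ Dsub gr (N : ℤ) := by
      rw [hNpos]
      refine iSup₂_le fun j hj => ?_
      by_cases hjN : j ≤ (N : ℤ)
      · exact gr_le_Dsub gr hjN
      · rw [hvan j (by omega)]
        exact bot_le
    exact hle hWp
  obtain ⟨u, hu⟩ := C2 N Wpos hWD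
  exact ⟨u, hNnegD ▸ hu⟩
end

section
/- Let G be a finite group acting linearly on a finite-dimensional F_q-vector space V with dual V*. Fix α ∈ V* and a subspace Σ' ⊆ V* with affine translate Σ = α + Σ'. Define Γ_α ∈ C(V) as in the graded Gelfand–Graev construction: Γ_α(x) = q^N ∑_{g ∈ G : g·x ∈ W} χ(-α(g·x)), where W ⊆ V is the annihilator-dual subspace such that λ ∈ V* vanishes on W iff λ ∈ Σ'. Then for any G-orbit O'* ⊆ V*, the inner product ⟨χ_{O'*}, Γ_α⟩_V is nonzero if and only if O'* ∩ Σ ≠ ∅. -/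
/-- The inner product `⟨f,g⟩ = q^{-N} ∑_v conj (f v) * g v` on functions on a finite set. -/
noncomputable def ip {W : Type*} [Fintype W] (q N : ℕ) (f g : W → ℂ) : ℂ :=
  ((q : ℂ) ^ N)⁻¹ * ∑ w : W, (starRingEnd ℂ) (f w) * g w


open Classical in
lemma sumW_char {Fq V : Type*} [Field Fq] [Fintype Fq] [AddCommGroup V] [Module Fq V] [Fintype V]
    (χ : AddChar Fq ℂ) (hχ : ∃ a, χ a ≠ 1) (W : Submodule Fq V)
    (μ : Module.Dual Fq V) :
    ∑ y : W, χ (μ y) = if μ ∈ Submodule.dualAnnihilator W then (Fintype.card W : ℂ) else 0 := by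
  classical
  let ψ : AddChar W ℂ := χ.compAddMonoidHom (μ.comp W.subtype).toAddMonoidHom
  have hψ : ∀ y : W, ψ y = χ (μ y) := fun y => rfl
  have key : ψ = 0 ↔ μ ∈ Submodule.dualAnnihilator W := by
    rw [Submodule.mem_dualAnnihilator]
    constructor
    · intro h w hw
      by_contra hne
      obtain ⟨a, ha⟩ := hχ
      have : ψ ⟨(a * (μ w)⁻¹) • w, W.smul_mem _ hw⟩ = 1 := by rw [h]; rfl
      rw [hψ] at this
      simp only [map_smul, smul_eq_mul] at this
      rw [mul_assoc, inv_mul_cancel₀ hne, mul_one] at this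
      exact ha this
    · intro h
      ext y
      rw [hψ, h y y.2, AddChar.map_zero_eq_one]
      rfl
  calc ∑ y : W, χ (μ y) = ∑ y : W, ψ y := by simp [hψ]
    _ = _ := by rw [AddChar.sum_eq_ite, if_congr key rfl rfl]

open Classical in
lemma dAct_mul {Fq V : Type*} [Field Fq] [AddCommGroup V] [Module Fq V] {G : Type*} [Group G]
    (ρ : G →* (V ≃ₗ[Fq] V)) (g h : G) (β : Module.Dual Fq V) :
    dAct ρ g (dAct ρ h β) = dAct ρ (g * h) β := by
  ext x
  simp [dAct, mul_inv_rev, map_mul]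

open Classical in
lemma dAct_one {Fq V : Type*} [Field Fq] [AddCommGroup V] [Module Fq V] {G : Type*} [Group G]
    (ρ : G →* (V ≃ₗ[Fq] V)) (β : Module.Dual Fq V) :
    dAct ρ 1 β = β := by
  ext x
  simp [dAct, map_one]

set_option maxHeartbeats 1000000 in
open Classical in
theorem stmt15 (Fq : Type*) [Field Fq] [Fintype Fq]
    (χ : AddChar Fq ℂ) (hχ : ∃ a, χ a ≠ 1)
    (V : Type*) [AddCommGroup V] [Module Fq V] [Fintype V] [Fintype (Module.Dual Fq V)]
    (N : ℕ) (hN : Module.finrank Fq V = N)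
    (G : Type*) [Group G] [Fintype G] (ρ : G →* (V ≃ₗ[Fq] V))
    (W : Submodule Fq V) (α : Module.Dual Fq V)
    (Sig : Set (Module.Dual Fq V))
    (hSig : Sig = {β | ∃ μ ∈ Submodule.dualAnnihilator W, β = α + μ})
    (Γ : V → ℂ)
    (hΓ : Γ = fun x => ((Fintype.card Fq : ℂ) ^ N) *
      ∑ g : G, if ρ g x ∈ W then χ (-(α (ρ g x))) else 0)
    (O : Set (Module.Dual Fq V)) (hO : ∃ β, O = dOrbit ρ β) :
    ip (Fintype.card Fq) N (chiO χ N O) Γ ≠ 0 ↔ (O ∩ Sig).Nonempty := by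
  classical
  set q := Fintype.card Fq with hq
  have hq0 : 0 < q := Fintype.card_pos
  have hc : ((ftNorm Fq N : ℝ) : ℂ) ≠ 0 := by
    simp only [ne_eq, Complex.ofReal_eq_zero, ftNorm]
    positivity
  have hqN : ((q : ℂ) ^ N) ≠ 0 :=
    pow_ne_zero _ (Nat.cast_ne_zero.2 hq0.ne')
  have hact : ∀ (g : G) (β : Module.Dual Fq V) (x : V), (dAct ρ g β) (ρ g x) = β x := by
    intro g β x
    have h1 : ρ g⁻¹ = (ρ g).symm := by rw [map_inv]; rfl
    simp [dAct, h1]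
  have hSig' : ∀ γ : Module.Dual Fq V, γ ∈ Sig ↔ γ - α ∈ Submodule.dualAnnihilator W := by
    intro γ
    subst hSig
    constructor
    · rintro ⟨μ, hμ, rfl⟩
      simpa using hμ
    · intro h
      exact ⟨γ - α, h, by abel⟩
  have hWsum : ∀ f : V → ℂ, ∑ y : V, (if y ∈ W then f y else 0) = ∑ y : W, f y := by
    intro f
    rw [← Finset.sum_filter]
    exact Finset.sum_subtype _ (by simp) f
  -- Step 1: simplify chiO
  have hchi : ∀ v : V, chiO χ N O v = ∑ β : Module.Dual Fq V, (if β ∈ O then χ (-(β v)) else 0) := by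
    intro v
    simp only [chiO, FTdual, Set.indicator_apply]
    rw [Finset.mul_sum]
    rw [← Fintype.sum_equiv (Equiv.neg (Module.Dual Fq V))
      (fun β => ((ftNorm Fq N : ℝ) : ℂ)⁻¹ * (χ ((Equiv.neg _ β) v) *
        (((ftNorm Fq N : ℝ) : ℂ) * if -(Equiv.neg _ β) ∈ O then (1:ℂ) else 0)))
      (fun β => ((ftNorm Fq N : ℝ) : ℂ)⁻¹ * (χ (β v) *
        (((ftNorm Fq N : ℝ) : ℂ) * if -β ∈ O then (1:ℂ) else 0))) (fun β => rfl)]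
    refine Finset.sum_congr rfl fun β _ => ?_
    simp only [Equiv.neg_apply, LinearMap.neg_apply, neg_neg]
    by_cases hb : β ∈ O
    · simp only [hb, if_true, mul_one]
      field_simp
    · simp [hb]
  -- Step 2: conjugate
  have hconj : ∀ v : V, (starRingEnd ℂ) (chiO χ N O v)
      = ∑ β : Module.Dual Fq V, (if β ∈ O then χ (β v) else 0) := by
    intro v
    rw [hchi, map_sum]
    refine Finset.sum_congr rfl fun β _ => ?_
    split_ifs
    · rw [← AddChar.map_neg_eq_conj, neg_neg]
    · exact map_zero _
  -- Step 3: the inner product as a count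
  have key : ip q N (chiO χ N O) Γ
      = ∑ β : Module.Dual Fq V, ∑ g : G,
          (if β ∈ O ∧ dAct ρ g β ∈ Sig then (Fintype.card W : ℂ) else 0) := by
    have step1 : ∀ v : V, (starRingEnd ℂ) (chiO χ N O v) * Γ v
        = (q : ℂ) ^ N * ∑ β : Module.Dual Fq V, ∑ g : G,
            (if β ∈ O ∧ ρ g v ∈ W then χ (β v) * χ (-(α (ρ g v))) else 0) := by
      intro v
      rw [hconj]
      simp only [hΓ]
      rw [show ((q:ℂ)^N * ∑ g : G, if ρ g v ∈ W then χ (-(α (ρ g v))) else 0)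
          = (∑ g : G, if ρ g v ∈ W then χ (-(α (ρ g v))) else 0) * (q:ℂ)^N from mul_comm _ _]
      rw [← mul_assoc, Fintype.sum_mul_sum]
      rw [mul_comm _ ((q:ℂ)^N)]
      congr 1
      refine Finset.sum_congr rfl fun β _ => Finset.sum_congr rfl fun g _ => ?_
      by_cases h1 : β ∈ O <;> by_cases h2 : ρ g v ∈ W <;> simp [h1, h2]
    have step2 : ∀ (β : Module.Dual Fq V) (g : G),
        (∑ v : V, if β ∈ O ∧ ρ g v ∈ W then χ (β v) * χ (-(α (ρ g v))) else 0)
        = if β ∈ O ∧ dAct ρ g β ∈ Sig then (Fintype.card W : ℂ) else 0 := by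
      intro β g
      by_cases h1 : β ∈ O
      · have : (∑ v : V, if β ∈ O ∧ ρ g v ∈ W then χ (β v) * χ (-(α (ρ g v))) else 0)
            = ∑ v : V, (fun y => if y ∈ W then χ ((dAct ρ g β - α) y) else 0) (ρ g v) := by
          refine Finset.sum_congr rfl fun v _ => ?_
          by_cases h2 : ρ g v ∈ W <;>
            simp only [h1, h2, true_and, if_true, if_false]
          rw [LinearMap.sub_apply, hact, sub_eq_add_neg, AddChar.map_add_eq_mul]
        have hF := Fintype.sum_bijective (⇑(ρ g)) (ρ g).bijective
          (fun v => (fun y => if y ∈ W then χ ((dAct ρ g β - α) y) else 0) (ρ g v))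
          (fun y => if y ∈ W then χ ((dAct ρ g β - α) y) else 0) (fun v => rfl)
        rw [this, hF, hWsum, sumW_char χ hχ W]
        have : dAct ρ g β - α ∈ Submodule.dualAnnihilator W ↔ dAct ρ g β ∈ Sig :=
          (hSig' _).symm
        simp only [h1, true_and, this]
      · simp [h1]
    simp only [ip, step1]
    rw [← Finset.mul_sum, ← mul_assoc, inv_mul_cancel₀ hqN, one_mul, Finset.sum_comm]
    refine Finset.sum_congr rfl fun β _ => ?_
    rw [Finset.sum_comm]
    exact Finset.sum_congr rfl fun g _ => step2 β g
  -- Step 4: conclude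
  rw [key]
  rw [show (∑ β : Module.Dual Fq V, ∑ g : G,
        (if β ∈ O ∧ dAct ρ g β ∈ Sig then (Fintype.card W : ℂ) else 0))
      = ∑ p : (Module.Dual Fq V) × G,
        (if p.1 ∈ O ∧ dAct ρ p.2 p.1 ∈ Sig then (Fintype.card W : ℂ) else 0) from
    (Fintype.sum_prod_type (fun p : (Module.Dual Fq V) × G =>
      if p.1 ∈ O ∧ dAct ρ p.2 p.1 ∈ Sig then (Fintype.card W : ℂ) else 0)).symm]
  rw [Finset.sum_ite, Finset.sum_const_zero, add_zero, Finset.sum_const, nsmul_eq_mul]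
  have hcW : (Fintype.card W : ℂ) ≠ 0 := Nat.cast_ne_zero.2 Fintype.card_ne_zero
  rw [mul_ne_zero_iff]
  constructor
  · rintro ⟨hcard, -⟩
    have : (Finset.univ.filter fun p : Module.Dual Fq V × G =>
        p.1 ∈ O ∧ dAct ρ p.2 p.1 ∈ Sig).Nonempty := by
      rw [← Finset.card_pos]
      exact Nat.pos_of_ne_zero (fun h => hcard (by rw [h]; simp))
    obtain ⟨⟨β, g⟩, hp⟩ := this
    rw [Finset.mem_filter] at hp
    obtain ⟨-, hβO, hβS⟩ := hp
    obtain ⟨β₀, rfl⟩ := hO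
    obtain ⟨h, rfl⟩ := hβO
    exact ⟨dAct ρ g (dAct ρ h β₀), ⟨g * h, (dAct_mul ρ g h β₀).symm⟩, hβS⟩
  · rintro ⟨β, hβO, hβS⟩
    constructor
    · rw [Nat.cast_ne_zero, ← Nat.pos_iff_ne_zero, Finset.card_pos]
      exact ⟨(β, 1), Finset.mem_filter.2 ⟨Finset.mem_univ _, hβO, by rwa [dAct_one]⟩⟩
    · exact hcW
end
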